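/- Let (M, cl) be a pregeometry with trivial closure, meaning cl(A) = ⋃_{a ∈ A} cl({a}) for every subset A ⊆ M. Suppose a₁, …, a_n ∈ M and no a_i lies in cl(∅), and let {b₁, …, b_r} ⊆ {a₁, …, a_n} be a basis for {a₁, …, a_n} (an independent subset whose closure contains all a_i). Then for each j there is a unique i ≤ r with a_j ∈ cl({b_i}). -/

import Mathlib

/-- A pregeometry (matroid closure operator) on a set `M`. -/
structure Pregeometry (M : Type*) where
  cl : Set M → Set M
  subset_cl : ∀ A : Set M, A ⊆ cl A
  mono : ∀ A B : Set M, A ⊆ B → cl A ⊆ cl B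
  idem : ∀ A : Set M, cl (cl A) = cl A
  finChar : ∀ (A : Set M) (x : M), x ∈ cl A → ∃ F : Finset M, ↑F ⊆ A ∧ x ∈ cl ↑F
  exchange : ∀ (A : Set M) (a b : M),
    a ∈ cl (A ∪ {b}) → a ∉ cl A → b ∈ cl (A ∪ {a})

namespace Pregeometry

variable {M : Type*} (P : Pregeometry M)

def Indep (B : Set M) : Prop := ∀ x ∈ B, x ∉ P.cl (B \ {x})

variable {P}

theorem cl_subset_cl_of_subset_cl {A B : Set M} (h : A ⊆ P.cl B) : P.cl A ⊆ P.cl B :=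
  P.idem B ▸ P.mono A (P.cl B) h

theorem cl_singleton_subset_of_mem {x y : M} (h : x ∈ P.cl {y}) : P.cl {x} ⊆ P.cl {y} :=
  cl_subset_cl_of_subset_cl (Set.singleton_subset_iff.mpr h)

theorem mem_cl_singleton_symm {x y : M} (h : x ∈ P.cl {y}) (hx : x ∉ P.cl ∅) :
    y ∈ P.cl {x} := by
  simpa using P.exchange ∅ x y (by simpa using h) hx

theorem exists_mem_cl_singleton_of_mem_cl
    (htriv : ∀ A : Set M, P.cl A = ⋃ a ∈ A, P.cl {a}) {B : Set M} {z : M}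
    (hz : z ∈ P.cl B) : ∃ x ∈ B, z ∈ P.cl {x} := by
  simpa [htriv B] using hz

theorem Indep.eq_of_mem_cl_singleton {B : Set M} (hB : P.Indep B) {x y z : M}
    (hx : x ∈ B) (hy : y ∈ B) (hzx : z ∈ P.cl {x}) (hzy : z ∈ P.cl {y})
    (hz : z ∉ P.cl ∅) : x = y := by
  by_contra hne
  have hyx : y ∈ P.cl {x} := cl_singleton_subset_of_mem hzx (mem_cl_singleton_symm hzy hz)
  have hxB : {x} ⊆ B \ {y} := Set.singleton_subset_iff.mpr ⟨hx, hne⟩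
  exact hB y hy (P.mono _ _ hxB hyx)

end Pregeometry

theorem trivial_pregeometry_unique_basis_element_general {M : Type*} (P : Pregeometry M)
    (htriv : ∀ A : Set M, P.cl A = ⋃ a ∈ A, P.cl {a})
    {n : ℕ} (a : Fin n → M) (ha : ∀ j, a j ∉ P.cl ∅)
    (B : Set M)
    (hBind : ∀ x ∈ B, x ∉ P.cl (B \ {x}))
    (hBspan : Set.range a ⊆ P.cl B) :
    ∀ j, ∃! x, x ∈ B ∧ a j ∈ P.cl {x} := by
  intro j
  obtain ⟨x, hxB, hx⟩ :=
    Pregeometry.exists_mem_cl_singleton_of_mem_cl htriv (hBspan ⟨j, rfl⟩)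
  exact ⟨x, ⟨hxB, hx⟩, fun y ⟨hyB, hy⟩ =>
    Pregeometry.Indep.eq_of_mem_cl_singleton hBind hyB hxB hy hx (ha j)⟩

/-- In a trivial pregeometry, each element of a finite set not lying in cl(∅)
is in the closure of a unique element of any basis of that set. -/
theorem trivial_pregeometry_unique_basis_element {M : Type*} (P : Pregeometry M)
    (htriv : ∀ A : Set M, P.cl A = ⋃ a ∈ A, P.cl {a})
    {n : ℕ} (a : Fin n → M) (ha : ∀ j, a j ∉ P.cl ∅)
    (B : Set M) (hBsub : B ⊆ Set.range a)
    (hBind : ∀ x ∈ B, x ∉ P.cl (B \ {x}))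
    (hBspan : Set.range a ⊆ P.cl B) :
    ∀ j, ∃! x, x ∈ B ∧ a j ∈ P.cl {x} :=
  trivial_pregeometry_unique_basis_element_general P htriv a ha B hBind hBspan
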